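/- arXiv:1701.05328 — 4 statements merged into one kernel-verified Lean document; each statement's English description precedes it below -/
import Mathlib

section
/- Let F be a field, let f ∈ F[X₁,…,X_N] be a nonzero multilinear polynomial with exactly s monomials, and let g ∈ F[X₁,…,X_N] be any nonzero polynomial. Then the product f·g has at least s monomials. -/
open MvPolynomial

section Aux

variable {F : Type*} [Field F]

lemma slice_subset (n : ℕ) (q : MvPolynomial (Fin (n+1)) F) (i : ℕ) :
    (((finSuccEquiv F n q).coeff i).support.image (Finsupp.cons i)) ⊆ q.support := by
  intro x hx
  obtain ⟨m, hm, rfl⟩ := Finset.mem_image.1 hx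
  exact MvPolynomial.mem_support_coeff_finSuccEquiv.1 hm

lemma two_slice_card_le (n : ℕ) (q : MvPolynomial (Fin (n+1)) F) {i k : ℕ} (hik : i ≠ k) :
    ((finSuccEquiv F n q).coeff i).support.card
      + ((finSuccEquiv F n q).coeff k).support.card ≤ q.support.card := by
  set A := ((finSuccEquiv F n q).coeff i).support.image (Finsupp.cons i) with hA
  set B := ((finSuccEquiv F n q).coeff k).support.image (Finsupp.cons k) with hB
  have hdisj : Disjoint A B := by
    rw [Finset.disjoint_left]
    rintro x hxA hxB
    obtain ⟨m, _, rfl⟩ := Finset.mem_image.1 hxA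
    obtain ⟨m', _, he⟩ := Finset.mem_image.1 hxB
    apply hik
    have := congrArg (fun f : Fin (n+1) →₀ ℕ => f 0) he
    simpa [Finsupp.cons_zero] using this.symm
  have hsub : A ∪ B ⊆ q.support :=
    Finset.union_subset (slice_subset n q i) (slice_subset n q k)
  calc ((finSuccEquiv F n q).coeff i).support.card
        + ((finSuccEquiv F n q).coeff k).support.card
      = A.card + B.card := by
        rw [hA, hB, Finset.card_image_of_injective _ (Finsupp.cons_right_injective i),
          Finset.card_image_of_injective _ (Finsupp.cons_right_injective k)]
    _ = (A ∪ B).card := (Finset.card_union_of_disjoint hdisj).symm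
    _ ≤ q.support.card := Finset.card_le_card hsub

lemma ml_card_le (n : ℕ) (f : MvPolynomial (Fin (n+1)) F)
    (hml : ∀ m ∈ f.support, ∀ i : Fin (n+1), m i ≤ 1) :
    f.support.card ≤ ((finSuccEquiv F n f).coeff 0).support.card
      + ((finSuccEquiv F n f).coeff 1).support.card := by
  have hsub : f.support ⊆
      ((finSuccEquiv F n f).coeff 0).support.image (Finsupp.cons 0)
        ∪ ((finSuccEquiv F n f).coeff 1).support.image (Finsupp.cons 1) := by
    intro m hm
    have h0 : m 0 ≤ 1 := hml m hm 0
    have hmem : Finsupp.tail m ∈ ((finSuccEquiv F n f).coeff (m 0)).support := by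
      rw [MvPolynomial.mem_support_coeff_finSuccEquiv, Finsupp.cons_tail]
      exact hm
    have hct := Finsupp.cons_tail m
    rcases Nat.le_one_iff_eq_zero_or_eq_one.1 h0 with h | h <;> rw [h] at hmem hct
    · exact Finset.mem_union_left _ (Finset.mem_image.2 ⟨Finsupp.tail m, hmem, hct⟩)
    · exact Finset.mem_union_right _ (Finset.mem_image.2 ⟨Finsupp.tail m, hmem, hct⟩)
  calc f.support.card ≤ _ := Finset.card_le_card hsub
    _ ≤ _ := Finset.card_union_le _ _
    _ ≤ _ := by
      rw [Finset.card_image_of_injective _ (Finsupp.cons_right_injective 0),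
        Finset.card_image_of_injective _ (Finsupp.cons_right_injective 1)]

lemma slice_ml (n : ℕ) (f : MvPolynomial (Fin (n+1)) F)
    (hml : ∀ m ∈ f.support, ∀ i : Fin (n+1), m i ≤ 1) (i : ℕ) :
    ∀ m ∈ ((finSuccEquiv F n f).coeff i).support, ∀ j : Fin n, m j ≤ 1 := by
  intro m hm j
  have h := MvPolynomial.mem_support_coeff_finSuccEquiv.1 hm
  have := hml _ h j.succ
  simpa [Finsupp.cons_succ] using this

lemma ef_decomp (n : ℕ) (f : MvPolynomial (Fin (n+1)) F)
    (hml : ∀ m ∈ f.support, ∀ i : Fin (n+1), m i ≤ 1) :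
    finSuccEquiv F n f = Polynomial.C ((finSuccEquiv F n f).coeff 0)
      + Polynomial.C ((finSuccEquiv F n f).coeff 1) * Polynomial.X := by
  ext k : 1
  match k with
  | 0 => simp
  | 1 => simp
  | (k+2) =>
    simp only [Polynomial.coeff_add, Polynomial.coeff_C, Polynomial.coeff_C_mul,
      Polynomial.coeff_X]
    rw [if_neg (by omega), if_neg (by omega)]
    rw [mul_zero, add_zero]
    apply MvPolynomial.ext
    intro m
    rw [MvPolynomial.finSuccEquiv_coeff_coeff]
    rw [MvPolynomial.coeff_zero, ← MvPolynomial.notMem_support_iff]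
    intro hmem
    have := hml _ hmem 0
    rw [Finsupp.cons_zero] at this
    omega

lemma aux_ml (n : ℕ) : ∀ (f g : MvPolynomial (Fin n) F),
    (∀ m ∈ f.support, ∀ i : Fin n, m i ≤ 1) → g ≠ 0 →
    f.support.card ≤ (f * g).support.card := by
  induction n with
  | zero =>
    intro f g _ hg
    by_cases hf : f = 0
    · simp [hf]
    have h1 : f.support.card ≤ 1 :=
      Finset.card_le_one.2 fun a _ b _ => Subsingleton.elim a b
    have h2 : f * g ≠ 0 := mul_ne_zero hf hg
    have h3 : 1 ≤ (f * g).support.card :=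
      Finset.card_pos.2 (MvPolynomial.support_nonempty.2 h2)
    omega
  | succ n ih =>
    intro f g hml hg
    set e := finSuccEquiv F n with he
    set f0 := (e f).coeff 0 with hf0
    set f1 := (e f).coeff 1 with hf1
    set G := e g with hG
    have hGne : G ≠ 0 := by
      rw [hG, he]
      simpa using hg
    set j := G.natTrailingDegree with hj
    set d := G.natDegree with hd
    have hgj : G.coeff j ≠ 0 := Polynomial.trailingCoeff_nonzero_iff_nonzero.2 hGne
    have hgd : G.coeff d ≠ 0 := by
      rw [hd, ← Polynomial.leadingCoeff]
      exact Polynomial.leadingCoeff_ne_zero.2 hGne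
    have hjd : j ≤ d := Polynomial.natTrailingDegree_le_natDegree G
    have hefg : e (f * g) = (e f) * G := map_mul e f g
    have hdecomp : e f = Polynomial.C f0 + Polynomial.C f1 * Polynomial.X :=
      ef_decomp n f hml
    have hXGj : (Polynomial.X * G).coeff j = 0 := by
      match hjj : j with
      | 0 => simp [Polynomial.mul_coeff_zero]
      | (k+1) =>
        rw [Polynomial.coeff_X_mul]
        exact Polynomial.coeff_eq_zero_of_lt_natTrailingDegree (by omega)
    have hcj : (e (f * g)).coeff j = f0 * G.coeff j := by
      rw [hefg, hdecomp, add_mul, mul_assoc, Polynomial.coeff_add,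
        Polynomial.coeff_C_mul, Polynomial.coeff_C_mul, hXGj, mul_zero, add_zero]
    have hcd : (e (f * g)).coeff (d + 1) = f1 * G.coeff d := by
      rw [hefg, hdecomp, add_mul, mul_assoc, Polynomial.coeff_add,
        Polynomial.coeff_C_mul, Polynomial.coeff_C_mul,
        Polynomial.coeff_eq_zero_of_natDegree_lt (by omega), mul_zero, zero_add,
        Polynomial.coeff_X_mul]
    have h0 := ih f0 (G.coeff j) (slice_ml n f hml 0) hgj
    have h1 := ih f1 (G.coeff d) (slice_ml n f hml 1) hgd
    calc f.support.card
        ≤ f0.support.card + f1.support.card := ml_card_le n f hml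
      _ ≤ (f0 * G.coeff j).support.card + (f1 * G.coeff d).support.card := by omega
      _ = ((e (f * g)).coeff j).support.card
            + ((e (f * g)).coeff (d + 1)).support.card := by rw [hcj, hcd]
      _ ≤ (f * g).support.card := two_slice_card_le n (f * g) (by omega)

end Aux

/-- if `f` is a multilinear polynomial with exactly `s` monomials and `g ≠ 0`,
then `f·g` has at least `s` monomials. -/
theorem stmt4 (F : Type*) [Field F] (N s : ℕ) (f g : MvPolynomial (Fin N) F)
    (hml : ∀ m ∈ f.support, ∀ i : Fin N, m i ≤ 1)
    (hs : f.support.card = s) (hg : g ≠ 0) :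
    s ≤ (f * g).support.card := by
  rw [← hs]
  exact aux_ml N f g hml hg
end

section
/- Let F be a field, F ∈ F[X₁,…,X_N] a nonzero polynomial with at most s monomials, and α ∈ F^N a vector with all coordinates nonzero. Then the shifted polynomial G(X) = F(X + α) contains a monomial whose support (number of distinct variables appearing in it) is at most log₂ s. -/
/-!
Induct on the number of variables, viewing `f` as a polynomial `P` in `X₀` over the remaining
ones, and write `P = (X₀ - α₀) ^ e * Q` with `Q(α₀) ≠ 0`. The `X₀ ^ e`-coefficient of the shifted
polynomial is the shift of `Q(α₀)` in the remaining variables, to which induction applies.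
For every monomial `m` of `Q(α₀)` the slice of `P` at `m` (the `m`-coefficients of its
coefficients, as a polynomial in `X₀`) is `(X₀ - α₀) ^ e` times a nonzero polynomial, so it has
at least two terms as soon as `e > 0`: a single term `c X₀ ^ k` does not vanish at `α₀ ≠ 0`.
Hence the sparsity of `f` is at least `2 ^ min e 1` times that of `Q(α₀)`, which pays for the
extra variable `X₀` in the monomial `X₀ ^ e * m`.
-/

open MvPolynomial

open scoped Polynomial

namespace Polynomial

theorem two_le_card_support_of_isRoot {R : Type*} [Semiring R] [NoZeroDivisors R] {p : R[X]}
    (hp : p ≠ 0) {a : R} (ha : a ≠ 0) (hroot : p.IsRoot a) : 2 ≤ p.support.card := by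
  by_contra! h
  obtain ⟨k, c, rfl⟩ := card_support_le_one_iff_monomial.mp (Nat.le_of_lt_succ h)
  have hc : c ≠ 0 := by rintro rfl; exact hp (map_zero _)
  rw [IsRoot, eval_monomial] at hroot
  exact ha (eq_zero_of_pow_eq_zero ((mul_eq_zero.mp hroot).resolve_left hc))

theorem two_pow_min_le_card_support_X_sub_C_pow_mul {R : Type*} [CommRing R] [IsDomain R]
    {a : R} (ha : a ≠ 0) {q : R[X]} (hq : q ≠ 0) (e : ℕ) :
    2 ^ min e 1 ≤ ((X - C a) ^ e * q).support.card := by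
  have hne : (X - C a) ^ e * q ≠ 0 := mul_ne_zero (pow_ne_zero _ (X_sub_C_ne_zero a)) hq
  rcases e with _ | e
  · simpa [Finset.one_le_card] using hne
  · simpa using two_le_card_support_of_isRoot hne ha (by simp [IsRoot])

end Polynomial

theorem Finsupp.card_support_cons_le {n : ℕ} (e : ℕ) (s : Fin n →₀ ℕ) :
    (cons e s).support.card ≤ s.support.card + min e 1 := by
  rcases e with _ | e
  · have : (cons 0 s).support ⊆ s.support.map (Fin.succEmb n) := by
      intro i
      refine Fin.cases ?_ (fun j => ?_) i <;> simp [cons_zero, cons_succ]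
    simpa using Finset.card_le_card this
  · simpa using (Finset.card_le_card cons_support).trans (Finset.card_insert_le _ _)

namespace MvPolynomial

section CommSemiring

variable {R σ : Type*} [CommSemiring R]

noncomputable def slice (m : σ →₀ ℕ) (P : (MvPolynomial σ R)[X]) : R[X] :=
  ∑ j ∈ P.support, Polynomial.monomial j ((P.coeff j).coeff m)

@[simp]
theorem coeff_slice (m : σ →₀ ℕ) (P : (MvPolynomial σ R)[X]) (j : ℕ) :
    (slice m P).coeff j = (P.coeff j).coeff m := by
  rw [slice, Polynomial.finsetSum_coeff]
  simp_rw [Polynomial.coeff_monomial]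
  rw [Finset.sum_ite_eq']
  split_ifs with h
  · rfl
  · rw [Polynomial.notMem_support_iff.mp h, coeff_zero]

theorem slice_map_C_mul (m : σ →₀ ℕ) (p : R[X]) (P : (MvPolynomial σ R)[X]) :
    slice m (p.map C * P) = p * slice m P := by
  ext j
  simp [Polynomial.coeff_mul, coeff_sum, coeff_C_mul]

theorem coeff_eval_C (m : σ →₀ ℕ) (P : (MvPolynomial σ R)[X]) (a : R) :
    (P.eval (C a)).coeff m = (slice m P).eval a := by
  rw [Polynomial.eval_eq_sum, Polynomial.sum_def, coeff_sum, slice, Polynomial.eval_finsetSum]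
  refine Finset.sum_congr rfl fun j _ => ?_
  rw [Polynomial.eval_monomial, ← map_pow, mul_comm, coeff_C_mul, mul_comm]

theorem sum_card_support_slice_finSuccEquiv_le {n : ℕ} (f : MvPolynomial (Fin (n + 1)) R)
    (M : Finset (Fin n →₀ ℕ)) :
    ∑ m ∈ M, (slice m (finSuccEquiv R n f)).support.card ≤ f.support.card := by
  rw [← Finset.card_sigma]
  refine Finset.card_le_card_of_injOn (fun x => Finsupp.cons x.2 x.1) (fun x hx => ?_) ?_
  · simpa [finSuccEquiv_coeff_coeff] using (Finset.mem_sigma.mp hx).2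
  · rintro ⟨m, j⟩ - ⟨m', j'⟩ - h
    obtain ⟨rfl, rfl⟩ := Finsupp.cons_injective2 h
    rfl

noncomputable def shift (α : σ → R) : MvPolynomial σ R →ₐ[R] MvPolynomial σ R :=
  aeval fun i => X i + C (α i)

theorem finSuccEquiv_shift {n : ℕ} (α : Fin (n + 1) → R) (f : MvPolynomial (Fin (n + 1)) R) :
    finSuccEquiv R n (shift α f) =
      Polynomial.taylor (C (α 0)) ((finSuccEquiv R n f).map (shift (Fin.tail α))) := by
  have : (finSuccEquiv R n).toAlgHom.comp (shift α) =
      ((Polynomial.taylorAlgHom (C (α 0))).restrictScalars R).comp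
        ((Polynomial.mapAlgHom (shift (Fin.tail α))).comp (finSuccEquiv R n).toAlgHom) := by
    refine algHom_ext fun i => Fin.cases ?_ (fun j => ?_) i <;>
      simp [shift, Fin.tail, finSuccEquiv_apply]
  exact DFunLike.congr_fun this f

end CommSemiring

section CommRing

variable {R : Type*} [CommRing R] {n : ℕ}

theorem coeff_finSuccEquiv_shift (α : Fin (n + 1) → R) {f : MvPolynomial (Fin (n + 1)) R}
    {e : ℕ} {Q : (MvPolynomial (Fin n) R)[X]}
    (hf : finSuccEquiv R n f = (Polynomial.X - Polynomial.C (C (α 0))) ^ e * Q) :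
    (finSuccEquiv R n (shift α f)).coeff e = shift (Fin.tail α) (Q.eval (C (α 0))) := by
  have hC : (shift (Fin.tail α) : MvPolynomial (Fin n) R →+* MvPolynomial (Fin n) R)
      (C (α 0)) = C (α 0) :=
    (shift _).commutes (α 0)
  -- The Taylor shift turns `(X - a) ^ e` into `X ^ e`; the constant term of `Q(X + a)` is `Q(a)`.
  rw [finSuccEquiv_shift, hf, Polynomial.map_mul, Polynomial.map_pow, Polynomial.map_sub,
    Polynomial.map_X, Polynomial.map_C, hC, Polynomial.taylor_mul, Polynomial.taylor_pow,
    map_sub, Polynomial.taylor_X, Polynomial.taylor_C, add_sub_cancel_right,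
    Polynomial.coeff_X_pow_mul', if_pos le_rfl, Nat.sub_self, Polynomial.taylor_coeff_zero,
    Polynomial.eval_map]
  conv_lhs => rw [← hC, Polynomial.eval₂_at_apply]
  rfl

variable [IsDomain R]

theorem two_pow_min_mul_card_support_eval_le {a : R} (ha : a ≠ 0)
    {f : MvPolynomial (Fin (n + 1)) R} {e : ℕ} {Q : (MvPolynomial (Fin n) R)[X]}
    (hf : finSuccEquiv R n f = (Polynomial.X - Polynomial.C (C a)) ^ e * Q) :
    2 ^ min e 1 * (Q.eval (C a)).support.card ≤ f.support.card := by
  have hslice (m : Fin n →₀ ℕ) :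
      slice m (finSuccEquiv R n f) = (.X - .C a) ^ e * slice m Q := by
    rw [hf, ← slice_map_C_mul]
    simp
  calc 2 ^ min e 1 * (Q.eval (C a)).support.card
      = ∑ m ∈ (Q.eval (C a)).support, 2 ^ min e 1 := by
        rw [Finset.sum_const, smul_eq_mul, mul_comm]
    _ ≤ ∑ m ∈ (Q.eval (C a)).support, (slice m (finSuccEquiv R n f)).support.card := by
        refine Finset.sum_le_sum fun m hm => ?_
        have hQm : slice m Q ≠ 0 := by
          rintro h
          simp [coeff_eval_C, h] at hm
        rw [hslice]
        exact Polynomial.two_pow_min_le_card_support_X_sub_C_pow_mul ha hQm e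
    _ ≤ f.support.card := sum_card_support_slice_finSuccEquiv_le f _

theorem exists_mem_support_shift_two_pow_card_le (f : MvPolynomial (Fin n) R)
    (hf : f ≠ 0) (α : Fin n → R) (hα : ∀ i, α i ≠ 0) :
    ∃ m ∈ (shift α f).support, 2 ^ m.support.card ≤ f.support.card := by
  induction n with
  | zero =>
    obtain ⟨c, rfl⟩ := C_surjective (Fin 0) f
    refine ⟨0, by simpa [shift] using hf, ?_⟩
    simpa [Finset.one_le_card] using hf
  | succ n ih =>
    set P := finSuccEquiv R n f
    set e := P.rootMultiplicity (C (α 0))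
    set Q := P /ₘ (Polynomial.X - Polynomial.C (C (α 0))) ^ e
    have hPQ : P = (Polynomial.X - Polynomial.C (C (α 0))) ^ e * Q :=
      (Polynomial.pow_mul_divByMonic_rootMultiplicity_eq P _).symm
    have hQ : Q.eval (C (α 0)) ≠ 0 :=
      Polynomial.eval_divByMonic_pow_rootMultiplicity_ne_zero _ (by simpa [P] using hf)
    obtain ⟨m, hm, hcard⟩ := ih _ hQ (Fin.tail α) fun i => hα i.succ
    refine ⟨Finsupp.cons e m, ?_, ?_⟩
    · rw [mem_support_iff, ← finSuccEquiv_coeff_coeff, coeff_finSuccEquiv_shift α hPQ]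
      exact mem_support_iff.mp hm
    · calc 2 ^ (Finsupp.cons e m).support.card
          ≤ 2 ^ min e 1 * 2 ^ m.support.card := by
            rw [← pow_add, add_comm (min e 1)]
            exact Nat.pow_le_pow_right two_pos (Finsupp.card_support_cons_le e m)
        _ ≤ 2 ^ min e 1 * (Q.eval (C (α 0))).support.card := Nat.mul_le_mul_left _ hcard
        _ ≤ f.support.card := two_pow_min_mul_card_support_eval_le (hα 0) hPQ

end CommRing

end MvPolynomial

/-- a nonzero polynomial with at most `s` monomials, shifted by a
full-support vector `α`, has a monomial of support at most `log₂ s`. -/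
theorem stmt5 (F : Type*) [Field F] (N s : ℕ) (f : MvPolynomial (Fin N) F)
    (hf : f ≠ 0) (hs : f.support.card ≤ s)
    (α : Fin N → F) (hα : ∀ i, α i ≠ 0) :
    ∃ m ∈ (MvPolynomial.aeval
        (fun i : Fin N => MvPolynomial.X i + MvPolynomial.C (α i)) f).support,
      m.support.card ≤ Nat.log 2 s := by
  obtain ⟨m, hm, hcard⟩ := exists_mem_support_shift_two_pow_card_le f hf α hα
  exact ⟨m, hm, Nat.le_log_of_pow_le one_lt_two (hcard.trans hs)⟩
end

section
/- Let F be a field, n, k ∈ ℕ, N = 2^n. For the succinct SV generator G_{n,k}(y, z) = coeff_x(∑_{i=1}^{k} yᵢ·∏_{j=1}^{n}(z_{i,j}x_j + 1 − z_{i,j})): for every family T = {S₁,…,S_k} of k distinct subsets of {1,…,n}, setting z_i = 1_{S_i} for each i yields a polynomial map whose coordinate indexed by S equals yᵢ if S = Sᵢ for some i, and equals 0 if S ∉ T. -/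
open MvPolynomial

/-! At `z_i = 1_{S_i}` the `j`-th factor of the `i`-th product is `x_j` for `j ∈ S_i` and `1`
otherwise, so the generator is `∑ i, y_i · x^{S_i}`; since subsets determine their multilinear
monomials, reading off the coefficient of `x^T` gives the claim. -/

/-- Multilinear monomial exponent vector of a subset. -/
noncomputable def mlMon {n : ℕ} (S : Finset (Fin n)) : Fin n →₀ ℕ :=
  ∑ j ∈ S, Finsupp.single j 1

/-- The succinct SV polynomial with `z` specialized to the characteristic vectors of
the subsets `S 0, …, S (k-1)`. -/
noncomputable def svQspec (F : Type*) [Field F] (n k : ℕ)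
    (y : Fin k → F) (S : Fin k → Finset (Fin n)) : MvPolynomial (Fin n) F :=
  ∑ i : Fin k, MvPolynomial.C (y i) *
    ∏ j : Fin n,
      (MvPolynomial.C (if j ∈ S i then (1 : F) else 0) * MvPolynomial.X j +
        MvPolynomial.C (1 - if j ∈ S i then (1 : F) else 0))

lemma mlMon_apply {n : ℕ} (S : Finset (Fin n)) (j : Fin n) :
    mlMon S j = if j ∈ S then 1 else 0 := by
  simp [mlMon, Finsupp.finsetSum_apply, Finsupp.single_apply]

lemma mlMon_injective {n : ℕ} : Function.Injective (mlMon (n := n)) := by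
  intro S T h
  ext j
  have hj := DFunLike.congr_fun h j
  rw [mlMon_apply, mlMon_apply] at hj
  split_ifs at hj <;> tauto

lemma prod_indicator_mul_X_add_eq_monomial_mlMon {R : Type*} [CommRing R] {n : ℕ}
    (S : Finset (Fin n)) :
    ∏ j : Fin n, (C (if j ∈ S then (1 : R) else 0) * X j + C (1 - if j ∈ S then (1 : R) else 0))
      = monomial (mlMon S) 1 := by
  calc _ = ∏ j : Fin n, (if j ∈ S then (X j : MvPolynomial (Fin n) R) else 1) := by
        refine Finset.prod_congr rfl fun j _ => ?_
        split_ifs <;> simp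
    _ = ∏ j ∈ S, monomial (Finsupp.single j 1) (1 : R) := by
        rw [Finset.prod_ite_mem, Finset.univ_inter]; rfl
    _ = monomial (mlMon S) 1 := (monomial_sum_one _ _).symm

lemma svQspec_eq_sum_monomial (F : Type*) [Field F] (n k : ℕ) (y : Fin k → F)
    (S : Fin k → Finset (Fin n)) :
    svQspec F n k y S = ∑ i, monomial (mlMon (S i)) (y i) := by
  simp only [svQspec, prod_indicator_mul_X_add_eq_monomial_mlMon, C_mul_monomial, mul_one]

lemma coeff_mlMon_svQspec (F : Type*) [Field F] (n k : ℕ) (y : Fin k → F)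
    (S : Fin k → Finset (Fin n)) (T : Finset (Fin n)) :
    (svQspec F n k y S).coeff (mlMon T) = ∑ i, if S i = T then y i else 0 := by
  simp only [svQspec_eq_sum_monomial, coeff_sum, coeff_monomial, mlMon_injective.eq_iff]

/-- with `z_i = 1_{S_i}` for distinct subsets `S_1,…,S_k`, the coordinate of
the succinct SV generator indexed by `S` equals `y_i` if `S = S_i` and `0` if `S ∉ T`. -/
theorem stmt9 (F : Type*) [Field F] (n k : ℕ) (S : Fin k → Finset (Fin n))
    (hS : Function.Injective S) (y : Fin k → F) :
    (∀ i : Fin k, (svQspec F n k y S).coeff (mlMon (S i)) = y i) ∧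
      (∀ T : Finset (Fin n), (∀ i : Fin k, T ≠ S i) →
        (svQspec F n k y S).coeff (mlMon T) = 0) := by
  refine ⟨fun i => ?_, fun T hT => ?_⟩
  · simp only [coeff_mlMon_svQspec, hS.eq_iff, Finset.sum_ite_eq', Finset.mem_univ, if_true]
  · simp only [coeff_mlMon_svQspec, fun i => (hT i).symm, if_false, Finset.sum_const_zero]
end

section
/- Let F be a field and let F ∈ F[X₁,…,X_N] be a nonzero polynomial such that the shifted polynomial F(X + 1) (shift every variable by 1) has a monomial of support at most k. Then F composed with the shifted succinct SV generator is nonzero: F(G_{n,k}(y,z) + 1) ≠ 0 as a polynomial in (y, z), where G_{n,k} is the succinct Shpilka–Volkovich polynomial map and 1 is the all-ones vector, N = 2^n. -/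
/-!
Let `m` be a monomial of `P(X + 1)` with at most `k` variables `X_{T_1}, …, X_{T_c}`.
Specialising `y_i ↦ X_{T_i}` and `z_{i,j} ↦ [j ∈ T_i]` (and `y_i ↦ 0` for `i > c`) collapses
`Q_{n,k}` to `∑_i X_{T_i} ∏_{j ∈ T_i} x_j`, so `G_{n,k} + 1` becomes `X_T + 1` for `T ∈ supp m`
and `1` otherwise. The specialised `P(G_{n,k} + 1)` is therefore `P(X + 1)` with the variables
outside `supp m` set to `0`, which still contains the monomial `m`.
-/

open MvPolynomial

/-- The succinct Shpilka–Volkovich polynomial `Q_{n,k}(y,z,x)`, with genuine variables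
`y_i` and `z_{i,j}` in the coefficient ring `F[y,z]`. -/
noncomputable def svQ (F : Type*) [Field F] (n k : ℕ) :
    MvPolynomial (Fin n) (MvPolynomial (Fin k ⊕ Fin k × Fin n) F) :=
  ∑ i : Fin k, MvPolynomial.C (MvPolynomial.X (Sum.inl i)) *
    ∏ j : Fin n,
      (MvPolynomial.C (MvPolynomial.X (Sum.inr (i, j))) * MvPolynomial.X j +
        MvPolynomial.C (1 - MvPolynomial.X (Sum.inr (i, j))))

/-- The succinct SV generator: the coordinate indexed by a subset `T ⊆ [n]` is the
coefficient of `∏_{j∈T} x_j` in `Q_{n,k}`, an element of `F[y,z]`. -/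
noncomputable def svG (F : Type*) [Field F] (n k : ℕ) (T : Finset (Fin n)) :
    MvPolynomial (Fin k ⊕ Fin k × Fin n) F :=
  (svQ F n k).coeff (mlMon T)

lemma support_mlMon {n : ℕ} (S : Finset (Fin n)) : (mlMon S).support = S := by
  ext j
  simp [mlMon_apply]

lemma prod_X_eq_monomial_mlMon {R : Type*} [CommSemiring R] {n : ℕ} (S : Finset (Fin n)) :
    ∏ j ∈ S, (X j : MvPolynomial (Fin n) R) = monomial (mlMon S) 1 := by
  simp only [X, mlMon, monomial_sum_one]

lemma killCompl_X_of_notMem_range {R σ τ : Type*} [CommSemiring R] {f : σ → τ}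
    (hf : Function.Injective f) {i : τ} (hi : i ∉ Set.range f) :
    killCompl (R := R) hf (X i) = 0 := by
  simp [killCompl, hi]

lemma killCompl_ne_zero {R σ τ : Type*} [CommSemiring R] {f : σ → τ}
    (hf : Function.Injective f) {p : MvPolynomial τ R} {m : τ →₀ ℕ} (hm : m ∈ p.support)
    (hmf : ↑m.support ⊆ Set.range f) : killCompl hf p ≠ 0 := by
  intro h
  have := coeff_killCompl hf (p := p) (s := m.comapDomain f hf.injOn)
  rw [h, Finsupp.mapDomain_comapDomain f hf m hmf, coeff_zero] at this
  exact mem_support_iff.mp hm this.symm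

section Planting

variable {F : Type*} [Field F] {n k : ℕ} {A : Type*} [CommRing A] [Algebra F A]

/-- The point `y_i = b_i`, `z_{i,j} = [j ∈ T_i]`. -/
def svPlant (b : Fin k → A) (T : Fin k → Finset (Fin n)) : Fin k ⊕ Fin k × Fin n → A :=
  Sum.elim b fun p => if p.2 ∈ T p.1 then 1 else 0

lemma map_aeval_svPlant_svQ (b : Fin k → A) (T : Fin k → Finset (Fin n)) :
    map (aeval (R := F) (svPlant b T) : _ →+* A) (svQ F n k) =
      ∑ i, monomial (mlMon (T i)) (b i) := by
  have factor : ∀ (p : Prop) [Decidable p] (j : Fin n),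
      C (if p then 1 else 0) * X j + (1 - C (if p then 1 else 0)) =
        (if p then X j else 1 : MvPolynomial (Fin n) A) := by
    intro p _ j
    split_ifs <;> simp
  simp only [svQ, map_sum, map_mul, map_prod, map_add, map_C, map_X, map_sub, map_one,
    RingHom.coe_coe, aeval_X, svPlant, Sum.elim_inl, Sum.elim_inr, factor]
  refine Finset.sum_congr rfl fun i _ => ?_
  rw [Finset.prod_ite_mem, Finset.univ_inter, prod_X_eq_monomial_mlMon, C_mul_monomial, mul_one]

lemma aeval_svPlant_svG (b : Fin k → A) (T : Fin k → Finset (Fin n)) (S : Finset (Fin n)) :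
    aeval (svPlant b T) (svG F n k S) = ∑ i, if T i = S then b i else 0 := by
  rw [svG, ← AlgHom.coe_toRingHom, ← coeff_map, map_aeval_svPlant_svQ, coeff_sum]
  simp only [coeff_monomial, mlMon_injective.eq_iff]

/-- `k`-wise independence of the generator. -/
theorem exists_aeval_svG_eq (s : Finset (Finset (Fin n))) (hs : s.card ≤ k)
    (a : Finset (Fin n) → A) (ha : ∀ T ∉ s, a T = 0) :
    ∃ v : Fin k ⊕ Fin k × Fin n → A, ∀ T, aeval v (svG F n k T) = a T := by
  classical
  obtain ⟨e⟩ : Nonempty (s ↪ Fin k) :=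
    Function.Embedding.nonempty_of_card_le (by simpa using hs)
  let T := Function.extend e Subtype.val fun _ => ∅
  let b := Function.extend e (a ∘ Subtype.val) 0
  refine ⟨svPlant b T, fun S => ?_⟩
  rw [aeval_svPlant_svG, ← Fintype.sum_of_injective e e.injective
    (fun t : s => if (t : Finset (Fin n)) = S then a t else 0)]
  · rw [Finset.sum_coe_sort s fun t => if t = S then a t else 0, Finset.sum_ite_eq']
    split_ifs with hS
    · rfl
    · exact (ha S hS).symm
  · intro i hi
    simp [b, Function.extend_apply' _ _ _ hi]
  · intro t
    simp [T, b, e.injective.extend_apply]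

end Planting

theorem stmt10_general (F : Type*) [Field F] (n k : ℕ)
    (P : MvPolynomial (Finset (Fin n)) F)
    (hsupp : ∃ m ∈ (MvPolynomial.aeval
        (fun T : Finset (Fin n) =>
          (MvPolynomial.X T : MvPolynomial (Finset (Fin n)) F) + 1) P).support,
      m.support.card ≤ k) :
    MvPolynomial.aeval (fun T : Finset (Fin n) => svG F n k T + 1) P ≠ 0 := by
  obtain ⟨m, hm, hcard⟩ := hsupp
  have hinj : Function.Injective (Subtype.val : m.support → Finset (Fin n)) :=
    Subtype.val_injective
  let κ := killCompl (R := F) hinj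
  obtain ⟨v, hv⟩ := exists_aeval_svG_eq (F := F) m.support hcard (fun T => κ (X T))
    fun T hT => killCompl_X_of_notMem_range hinj (by simpa using hT)
  have hcomp : (aeval v).comp (aeval fun T => svG F n k T + 1) =
      κ.comp (aeval fun T => (X T : MvPolynomial (Finset (Fin n)) F) + 1) :=
    algHom_ext fun T => by simp only [AlgHom.comp_apply, aeval_X, map_add, map_one, hv]
  have hshift : κ (aeval (fun T => (X T : MvPolynomial (Finset (Fin n)) F) + 1) P) ≠ 0 :=
    killCompl_ne_zero hinj hm fun T hT => ⟨⟨T, hT⟩, rfl⟩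
  intro h
  apply hshift
  rw [← AlgHom.comp_apply, ← hcomp, AlgHom.comp_apply, h, map_zero]

/-- if the shift `P(X+1)` of a nonzero polynomial `P` (on `N = 2^n`
variables indexed by subsets of `[n]`) has a monomial of support at most `k`, then
`P ∘ (G_{n,k} + 1) ≠ 0`. -/
theorem stmt10 (F : Type*) [Field F] (n k : ℕ)
    (P : MvPolynomial (Finset (Fin n)) F) (hP : P ≠ 0)
    (hsupp : ∃ m ∈ (MvPolynomial.aeval
        (fun T : Finset (Fin n) =>
          (MvPolynomial.X T : MvPolynomial (Finset (Fin n)) F) + 1) P).support,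
      m.support.card ≤ k) :
    MvPolynomial.aeval (fun T : Finset (Fin n) => svG F n k T + 1) P ≠ 0 :=
  stmt10_general F n k P hsupp
end
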